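/- On the quadratic lattice x(s) = s²: for α with Re α > 0 and z − a ∈ ℕ⁺, the α-th fractional sum of the constant function 1 equals ∇_γ^{−α} 1 (z) := ∑_{t=a+1}^{z} ([x_{γ+α−1}(z) − x_{γ+α−1}(t−1)]^{(α−1)}/Γ(α))·(x_γ(t)−x_γ(t−1)) = [x_{γ+α−1}(z) − x_{γ+α−1}(a)]^{(α)}/Γ(α+1). -/
import Mathlib


/-- Shifted quadratic lattice `x_γ(s) = (s + γ/2)²`. -/
noncomputable def xsh (γ s : ℝ) : ℝ := (s + γ / 2) ^ 2

/-- Generalized power `[x_ν(s) − x_ν(w)]^{(μ)}` on the quadratic lattice. -/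
noncomputable def gp (ν s w μ : ℝ) : ℝ :=
  Real.Gamma (s - w + μ) * Real.Gamma (s + w + ν + 1) /
    (Real.Gamma (s - w) * Real.Gamma (s + w + ν - μ + 1))

open Real in
lemma key13 (α M C : ℝ) (hα : 0 < α) (hM : 1 ≤ M) (hC : 0 < C) :
    Gamma (M + α - 1) * Gamma (C + α) / (Gamma M * Gamma (C + 1)) / Gamma α * (C - M + 1)
      = Gamma (M + α) * Gamma (C + α) / (Gamma M * Gamma C) / Gamma (α + 1)
        - Gamma (M + α - 1) * Gamma (C + α + 1) / (Gamma (M - 1) * Gamma (C + 1)) / Gamma (α + 1) := by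
  have hGα := Real.Gamma_pos_of_pos hα
  have hGC := Real.Gamma_pos_of_pos hC
  have hGCα := Real.Gamma_pos_of_pos (by linarith : (0:ℝ) < C + α)
  have hGMα1 := Real.Gamma_pos_of_pos (by linarith : (0:ℝ) < M + α - 1)
  have hC1 : Gamma (C + 1) = C * Gamma C := by
    have := Real.Gamma_add_one (ne_of_gt hC); linarith [this]
  have hCα1 : Gamma (C + α + 1) = (C + α) * Gamma (C + α) := by
    have := Real.Gamma_add_one (by positivity : C + α ≠ 0); linarith [this]
  have hα1 : Gamma (α + 1) = α * Gamma α := by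
    have := Real.Gamma_add_one (ne_of_gt hα); linarith [this]
  have hMα : Gamma (M + α) = (M + α - 1) * Gamma (M + α - 1) := by
    have := Real.Gamma_add_one (by linarith : M + α - 1 ≠ 0)
    rw [show M + α - 1 + 1 = M + α by ring] at this; linarith [this]
  rcases eq_or_lt_of_le hM with h1 | h1
  · subst h1
    rw [show (1:ℝ) + α - 1 = α by ring, show (1:ℝ) - 1 = 0 by ring, Real.Gamma_zero,
      Real.Gamma_one, show (1:ℝ) + α = α + 1 by ring, zero_mul, div_zero, zero_div, sub_zero,
      hC1, hα1]
    field_simp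
    ring
  · have hM1 : Gamma M = (M - 1) * Gamma (M - 1) := by
      have := Real.Gamma_add_one (by linarith : M - 1 ≠ 0)
      rw [show M - 1 + 1 = M by ring] at this; linarith [this]
    have hGM1 := Real.Gamma_pos_of_pos (by linarith : (0:ℝ) < M - 1)
    have hM1' : M - 1 ≠ 0 := by linarith
    rw [hM1, hC1, hCα1, hα1, hMα]
    field_simp [ne_of_gt hGα, ne_of_gt hGC, ne_of_gt hGCα, ne_of_gt hGM1, ne_of_gt hC, ne_of_gt hα, hM1']
    ring

/-- Fractional sum of the constant function `1` on the quadratic lattice: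
`∇_γ^{−α} 1 (z) = [x_{γ+α−1}(z) − x_{γ+α−1}(a)]^{(α)} / Γ(α+1)`, where `z = a + n`. -/
theorem stmt13 (a γ α : ℝ) (n : ℕ) (hn : 0 < n) (hα : 0 < α)
    (ha : 0 ≤ a) (hγ : 0 ≤ γ) :
    ∑ k ∈ Finset.range n,
        gp (γ + α - 1) (a + n) (a + k) (α - 1) / Real.Gamma α *
          (xsh γ (a + 1 + k) - xsh γ (a + k))
      = gp (γ + α - 1) (a + n) a α / Real.Gamma (α + 1) := by
  have hstep : ∀ k ∈ Finset.range n,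
      gp (γ + α - 1) (a + n) (a + k) (α - 1) / Real.Gamma α *
          (xsh γ (a + 1 + k) - xsh γ (a + k))
        = gp (γ + α - 1) (a + n) (a + (k : ℝ)) α / Real.Gamma (α + 1)
          - gp (γ + α - 1) (a + n) (a + ((k + 1 : ℕ) : ℝ)) α / Real.Gamma (α + 1) := by
    intro k hk
    rw [Finset.mem_range] at hk
    have hkn : (k : ℝ) + 1 ≤ (n : ℝ) := by exact_mod_cast hk
    have hn1 : (1 : ℝ) ≤ (n : ℝ) := by exact_mod_cast hn
    have hk0 : (0 : ℝ) ≤ (k : ℝ) := Nat.cast_nonneg k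
    set M : ℝ := (n : ℝ) - (k : ℝ) with hM
    set C : ℝ := 2 * a + (n : ℝ) + (k : ℝ) + γ with hC
    have hM1 : 1 ≤ M := by simp [hM]; linarith
    have hC0 : 0 < C := by simp [hC]; linarith
    have key := key13 α M C hα hM1 hC0
    simp only [gp, xsh]
    push_cast
    rw [show a + ↑n - (a + ↑k) + (α - 1) = M + α - 1 by rw [hM]; ring,
        show a + ↑n + (a + ↑k) + (γ + α - 1) + 1 = C + α by rw [hC]; ring,
        show a + ↑n - (a + ↑k) = M by rw [hM]; ring,
        show a + ↑n + (a + ↑k) + (γ + α - 1) - (α - 1) + 1 = C + 1 by rw [hC]; ring,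
        show (a + 1 + ↑k + γ / 2) ^ 2 - (a + ↑k + γ / 2) ^ 2 = C - M + 1 by rw [hC, hM]; ring,
        show a + ↑n + (a + ↑k) + (γ + α - 1) - α + 1 = C by rw [hC]; ring,
        show a + ↑n - (a + (↑k + 1)) + α = M + α - 1 by rw [hM]; ring,
        show a + ↑n + (a + (↑k + 1)) + (γ + α - 1) + 1 = C + α + 1 by rw [hC]; ring,
        show a + ↑n - (a + (↑k + 1)) = M - 1 by rw [hM]; ring,
        show a + ↑n + (a + (↑k + 1)) + (γ + α - 1) - α + 1 = C + 1 by rw [hC]; ring]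
    exact key
  rw [Finset.sum_congr rfl hstep,
    Finset.sum_range_sub' (fun k => gp (γ + α - 1) (a + n) (a + (k : ℝ)) α / Real.Gamma (α + 1)) n]
  have hzero : gp (γ + α - 1) (a + n) (a + (n : ℝ)) α = 0 := by
    simp [gp, sub_self, Real.Gamma_zero]
  simp [hzero]
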